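/- arXiv:1904.03403 — 7 statements merged into one kernel-verified Lean document; each statement's English description precedes it below -/
import Mathlib

section
/- The measure I_M satisfies Super-Additivity: if K and K' are disjoint finite sets of propositional formulas, then |MI(K ∪ K')| ≥ |MI(K)| + |MI(K')|. -/
def Consistent {F I : Type} (sat : I → F → Prop) (K : Finset F) : Prop :=
  ∃ i : I, ∀ φ ∈ K, sat i φ

def MI {F I : Type} (sat : I → F → Prop) (K : Finset F) : Set (Finset F) :=
  {X | X ⊆ K ∧ ¬ Consistent sat X ∧ ∀ Y ⊂ X, Consistent sat Y}

/-- `I_M` satisfies Super-Additivity: for disjoint `K`, `K'`,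
`|MI(K ∪ K')| ≥ |MI(K)| + |MI(K')|`. -/
theorem IM_super_additivity {F I : Type} [DecidableEq F] [Nonempty I]
    (sat : I → F → Prop) (K K' : Finset F) (h : Disjoint K K') :
    (MI sat K).ncard + (MI sat K').ncard ≤ (MI sat (K ∪ K')).ncard := by
  have hfin : (MI sat (K ∪ K')).Finite := by
    apply Set.Finite.subset (Finset.finite_toSet ((K ∪ K').powerset))
    intro X hX
    simp only [Finset.coe_powerset, Set.mem_preimage, Set.mem_powerset_iff]
    exact_mod_cast hX.1
  have hsub1 : MI sat K ⊆ MI sat (K ∪ K') := by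
    rintro X ⟨h1, h2, h3⟩
    exact ⟨h1.trans Finset.subset_union_left, h2, h3⟩
  have hsub2 : MI sat K' ⊆ MI sat (K ∪ K') := by
    rintro X ⟨h1, h2, h3⟩
    exact ⟨h1.trans Finset.subset_union_right, h2, h3⟩
  have hdisj : Disjoint (MI sat K) (MI sat K') := by
    rw [Set.disjoint_left]
    rintro X ⟨h1, h2, _⟩ ⟨h1', _, _⟩
    apply h2
    have : X = ∅ := Finset.subset_empty.mp (by
      simpa [Finset.disjoint_iff_inter_eq_empty.mp h] using
        Finset.subset_inter h1 h1')
    exact ⟨Classical.arbitrary I, by simp [this]⟩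
  calc (MI sat K).ncard + (MI sat K').ncard
      = (MI sat K ∪ MI sat K').ncard := by
        rw [Set.ncard_union_eq hdisj (hfin.subset hsub1) (hfin.subset hsub2)]
    _ ≤ (MI sat (K ∪ K')).ncard :=
        Set.ncard_le_ncard (Set.union_subset hsub1 hsub2) hfin
end

section
/- In a database with denial constraints, a formula of DB = D ∪ 𝒞 is free if and only if it is either a tuple that belongs to no minimal inconsistent subset of DB, or an integrity constraint that is not violated by D; moreover, every free formula of DB is safe. -/
def evalDB {α C : Type} (viol : C → Finset (Finset α)) : α ⊕ C → (α → Bool) → Prop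
  | Sum.inl t, i => i t = true
  | Sum.inr c, i => ∀ S ∈ viol c, ∃ t ∈ S, i t = false

def ConsDB {α C : Type} (viol : C → Finset (Finset α)) (X : Finset (α ⊕ C)) : Prop :=
  ∃ i : α → Bool, ∀ x ∈ X, evalDB viol x i

def MIDB {α C : Type} (viol : C → Finset (Finset α)) (X : Finset (α ⊕ C)) :
    Set (Finset (α ⊕ C)) :=
  {Y | Y ⊆ X ∧ ¬ ConsDB viol Y ∧ ∀ Z ⊂ Y, ConsDB viol Z}

/-- A formula of `DB` is free if it belongs to no minimal inconsistent subset. -/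
def FreeDB {α C : Type} (viol : C → Finset (Finset α)) (DB : Finset (α ⊕ C))
    (x : α ⊕ C) : Prop :=
  ∀ X ∈ MIDB viol DB, x ∉ X

/-- The atoms occurring in the propositional encoding of a formula of `DB`. -/
def atomsOf {α C : Type} [DecidableEq α] (viol : C → Finset (Finset α)) :
    α ⊕ C → Finset α
  | Sum.inl t => {t}
  | Sum.inr c => (viol c).sup id

/-- A formula is safe if it is free and shares no atoms with the other
formulas of `DB`. -/
def SafeDB {α C : Type} [DecidableEq α] (viol : C → Finset (Finset α))
    (DB : Finset (α ⊕ C)) (x : α ⊕ C) : Prop :=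
  FreeDB viol DB x ∧
    ∀ y ∈ DB, y ≠ x → Disjoint (atomsOf viol x) (atomsOf viol y)

/-- Key structural lemma: each violating combination `S ∈ viol c` gives rise to a
minimal inconsistent subset `{c} ∪ S`. -/
lemma mis_of_viol {α C : Type} [DecidableEq α] [DecidableEq C]
    (D : Finset α) (𝒞 : Finset C) (viol : C → Finset (Finset α))
    (hsub : ∀ c ∈ 𝒞, ∀ S ∈ viol c, S ⊆ D)
    (hanti : ∀ c ∈ 𝒞, ∀ S ∈ viol c, ∀ S' ∈ viol c, S' ⊆ S → S' = S)
    {c : C} (hc : c ∈ 𝒞) {S : Finset α} (hS : S ∈ viol c) :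
    insert (Sum.inr c) (S.image Sum.inl) ∈
      MIDB viol (D.image Sum.inl ∪ 𝒞.image Sum.inr) := by
  refine ⟨?_, ?_, ?_⟩
  · refine Finset.insert_subset ?_ ?_
    · exact Finset.mem_union_right _ (Finset.mem_image_of_mem _ hc)
    · intro x hx
      obtain ⟨t, ht, rfl⟩ := Finset.mem_image.mp hx
      exact Finset.mem_union_left _ (Finset.mem_image_of_mem _ (hsub c hc S hS ht))
  · rintro ⟨i, hi⟩
    have hcc := hi (Sum.inr c) (Finset.mem_insert_self _ _)
    obtain ⟨t, ht, hfalse⟩ := hcc S hS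
    have := hi (Sum.inl t)
      (Finset.mem_insert_of_mem (Finset.mem_image_of_mem _ ht))
    simp only [evalDB] at this hfalse
    rw [this] at hfalse
    simp at hfalse
  · intro Z hZ
    by_cases hcZ : Sum.inr c ∈ Z
    · obtain ⟨a, haY, haZ⟩ := Finset.exists_of_ssubset hZ
      have haY' := Finset.mem_insert.mp haY
      have hane : a ≠ Sum.inr c := fun h => haZ (h ▸ hcZ)
      obtain ⟨t0, ht0S, rfl⟩ := Finset.mem_image.mp (haY'.resolve_left hane)
      refine ⟨fun t => decide (Sum.inl t ∈ Z), ?_⟩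
      intro x hxZ
      have hxY := hZ.subset hxZ
      rcases Finset.mem_insert.mp hxY with h | h
      · subst h
        intro S' hS'
        by_contra hcon
        push_neg at hcon
        have hall : ∀ t ∈ S', Sum.inl t ∈ Z := by
          intro t htS'
          have := hcon t htS'
          simpa using this
        have hS'S : S' ⊆ S := by
          intro t htS'
          have := hZ.subset (hall t htS')
          rcases Finset.mem_insert.mp this with h | h
          · exact absurd h (by simp)
          · obtain ⟨u, hu, he⟩ := Finset.mem_image.mp h
            exact (Sum.inl.inj he) ▸ hu
        have hEq := hanti c hc S hS S' hS' hS'S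
        exact haZ (hall t0 (hEq ▸ ht0S))
      · obtain ⟨t, _, rfl⟩ := Finset.mem_image.mp h
        simpa [evalDB] using hxZ
    · refine ⟨fun _ => true, ?_⟩
      intro x hxZ
      have hxY := hZ.subset hxZ
      rcases Finset.mem_insert.mp hxY with h | h
      · exact absurd (h ▸ hxZ) hcZ
      · obtain ⟨t, _, rfl⟩ := Finset.mem_image.mp h
        simp [evalDB]

/-- A formula of `DB = D ∪ 𝒞` is free iff it is a tuple belonging to no minimal
inconsistent subset of `DB`, or a constraint that is not violated (no violating
combinations); moreover, every free formula of `DB` is safe. -/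
theorem freeDB_characterization_and_safe {α C : Type} [DecidableEq α] [DecidableEq C]
    (D : Finset α) (𝒞 : Finset C) (viol : C → Finset (Finset α))
    (hne : ∀ c ∈ 𝒞, ∀ S ∈ viol c, S.Nonempty)
    (hsub : ∀ c ∈ 𝒞, ∀ S ∈ viol c, S ⊆ D)
    (hanti : ∀ c ∈ 𝒞, ∀ S ∈ viol c, ∀ S' ∈ viol c, S' ⊆ S → S' = S) :
    (∀ x ∈ D.image Sum.inl ∪ 𝒞.image Sum.inr,
      (FreeDB viol (D.image Sum.inl ∪ 𝒞.image Sum.inr) x ↔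
        (∃ t ∈ D, x = Sum.inl t ∧
          ∀ X ∈ MIDB viol (D.image Sum.inl ∪ 𝒞.image Sum.inr), Sum.inl t ∉ X) ∨
        (∃ c ∈ 𝒞, x = Sum.inr c ∧ viol c = ∅))) ∧
    (∀ x ∈ D.image Sum.inl ∪ 𝒞.image Sum.inr,
      FreeDB viol (D.image Sum.inl ∪ 𝒞.image Sum.inr) x →
        SafeDB viol (D.image Sum.inl ∪ 𝒞.image Sum.inr) x) := by
  set DB := D.image Sum.inl ∪ 𝒞.image Sum.inr with hDB
  have hchar : ∀ x ∈ DB, (FreeDB viol DB x ↔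
      (∃ t ∈ D, x = Sum.inl t ∧ ∀ X ∈ MIDB viol DB, Sum.inl t ∉ X) ∨
      (∃ c ∈ 𝒞, x = Sum.inr c ∧ viol c = ∅)) := by
    intro x hx
    rcases Finset.mem_union.mp hx with h | h
    · obtain ⟨t, ht, rfl⟩ := Finset.mem_image.mp h
      constructor
      · intro hfree
        exact Or.inl ⟨t, ht, rfl, hfree⟩
      · rintro (⟨t', _, he, hfree⟩ | ⟨c, _, he, _⟩)
        · exact (Sum.inl.inj he) ▸ hfree
        · exact absurd he (by simp)
    · obtain ⟨c, hc, rfl⟩ := Finset.mem_image.mp h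
      constructor
      · intro hfree
        refine Or.inr ⟨c, hc, rfl, ?_⟩
        by_contra hvne
        obtain ⟨S, hS⟩ := Finset.nonempty_iff_ne_empty.mpr hvne
        exact hfree _ (mis_of_viol D 𝒞 viol hsub hanti hc hS)
          (Finset.mem_insert_self _ _)
      · rintro (⟨t, _, he, _⟩ | ⟨c', _, he, hv⟩)
        · exact absurd he (by simp)
        · obtain rfl : c' = c := Sum.inr.inj he.symm
          intro X hX hmem
          obtain ⟨hXsub, hXinc, hXmin⟩ := hX
          have hcons : ConsDB viol (X.erase (Sum.inr c')) :=
            hXmin _ (Finset.erase_ssubset hmem)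
          obtain ⟨i, hi⟩ := hcons
          refine hXinc ⟨i, ?_⟩
          intro y hy
          by_cases hyc : y = Sum.inr c'
          · subst hyc
            intro S hS
            simp [hv] at hS
          · exact hi y (Finset.mem_erase.mpr ⟨hyc, hy⟩)
  refine ⟨hchar, ?_⟩
  intro x hx hfree
  refine ⟨hfree, ?_⟩
  intro y hy hyx
  rcases (hchar x hx).mp hfree with ⟨t, ht, rfl, hfr⟩ | ⟨c, hc, rfl, hv⟩
  · -- x = Sum.inl t, atoms = {t}
    simp only [atomsOf, Finset.disjoint_singleton_left]
    rcases Finset.mem_union.mp hy with h | h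
    · obtain ⟨t', _, rfl⟩ := Finset.mem_image.mp h
      simp only [atomsOf, Finset.mem_singleton]
      intro he
      exact hyx (by rw [he])
    · obtain ⟨c, hc, rfl⟩ := Finset.mem_image.mp h
      simp only [atomsOf, Finset.mem_sup, id]
      rintro ⟨S, hS, htS⟩
      exact hfr _ (mis_of_viol D 𝒞 viol hsub hanti hc hS)
        (Finset.mem_insert_of_mem (Finset.mem_image_of_mem _ htS))
  · simp [atomsOf, hv]
end

section
/- Every minimal inconsistent subset of the propositional knowledge base K_DB obtained by transforming a database DB = D ∪ 𝒞 has the form {a_{i_1}, …, a_{i_k}, g(c)} for some constraint c ∈ 𝒞 and atoms a_{i_1}, …, a_{i_k} forming the negated literals of one conjunct of g(c); in particular, every minimal inconsistent subset of K_DB contains exactly one non-atomic formula. -/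
/-- Every minimal inconsistent subset of `K_DB` consists of the atoms of one
clause (violating combination) of one constraint `c` together with `g(c)`;
in particular it contains exactly one non-atomic formula. -/
theorem MIDB_structure {α C : Type} [DecidableEq α] [DecidableEq C]
    (D : Finset α) (𝒞 : Finset C) (viol : C → Finset (Finset α))
    (hne : ∀ c ∈ 𝒞, ∀ S ∈ viol c, S.Nonempty)
    (hsub : ∀ c ∈ 𝒞, ∀ S ∈ viol c, S ⊆ D) :
    ∀ X ∈ MIDB viol (D.image Sum.inl ∪ 𝒞.image Sum.inr),
      ∃ c ∈ 𝒞, ∃ S ∈ viol c,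
        X = S.image Sum.inl ∪ {Sum.inr c} ∧
        ∀ c' : C, Sum.inr c' ∈ X → c' = c := by
  classical
  rintro X ⟨hXsub, hXinc, hXmin⟩
  set i : α → Bool := fun t => decide (Sum.inl t ∈ X) with hi
  have hfail : ¬ ∀ x ∈ X, evalDB viol x i := fun h => hXinc ⟨i, h⟩
  push_neg at hfail
  obtain ⟨x, hxX, hx⟩ := hfail
  match x with
  | Sum.inl t =>
    exact absurd (by simp [evalDB, hi, hxX]) hx
  | Sum.inr c =>
    simp only [evalDB] at hx
    push_neg at hx
    obtain ⟨S, hS, hall⟩ := hx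
    have hc𝒞 : c ∈ 𝒞 := by
      have h := hXsub hxX
      simp only [Finset.mem_union, Finset.mem_image] at h
      rcases h with ⟨t, _, ht⟩ | ⟨c', hc', hc'eq⟩
      · exact absurd ht (by simp)
      · rwa [show c' = c from Sum.inr.inj hc'eq] at hc'
    refine ⟨c, hc𝒞, S, hS, ?_⟩
    set Y : Finset (α ⊕ C) := S.image Sum.inl ∪ {Sum.inr c} with hY
    have hYX : Y ⊆ X := by
      intro y hy
      simp only [hY, Finset.mem_union, Finset.mem_image, Finset.mem_singleton] at hy
      rcases hy with ⟨t, ht, rfl⟩ | rfl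
      · have h := hall t ht
        simpa [hi] using h
      · exact hxX
    have hYinc : ¬ ConsDB viol Y := by
      rintro ⟨j, hj⟩
      have hcr : evalDB viol (Sum.inr c) j :=
        hj _ (by simp [hY])
      obtain ⟨t, ht, hf⟩ := hcr S hS
      have htr : j t = true := hj (Sum.inl t) (by simp [hY, ht])
      simp [htr] at hf
    have hXY : X = Y := by
      by_contra hne'
      exact hYinc (hXmin Y (lt_of_le_of_ne hYX (Ne.symm hne')))
    refine ⟨hXY, ?_⟩
    intro c' hc'
    rw [hXY] at hc'
    simp only [hY, Finset.mem_union, Finset.mem_image, Finset.mem_singleton] at hc'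
    rcases hc' with ⟨t, _, ht⟩ | h
    · exact absurd ht (by simp)
    · exact Sum.inr.inj h
end

section
/- For databases, the hitting-set measure collapses to the drastic measure: for every database DB with denial constraints, I_hs(DB) = I_B(DB). That is, if K_DB is consistent then a single interpretation hits all formulas (I_hs = 0 = I_B), and if K_DB is inconsistent then two classical interpretations always suffice as a hitting set (I_hs = 1 = I_B). -/
/-- `I_hs(K)`: one less than the minimal size of a hitting set of classical
interpretations for `K` (each formula of `K` is satisfied by some member);
`∞` if there is none. -/
noncomputable def Ihs {α C : Type} (viol : C → Finset (Finset α))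
    (X : Finset (α ⊕ C)) : ℕ∞ :=
  sInf {n : ℕ∞ | ∃ H : Set (α → Bool), H.Finite ∧ (H.ncard : ℕ∞) = n ∧
    ∀ x ∈ X, ∃ i ∈ H, evalDB viol x i} - 1

open Classical in
/-- The drastic measure. -/
noncomputable def IBk {α C : Type} (viol : C → Finset (Finset α))
    (X : Finset (α ⊕ C)) : ℕ∞ :=
  if ConsDB viol X then 0 else 1

/-- For databases the hitting-set measure collapses to the drastic measure:
`I_hs(K_DB) = I_B(K_DB)`. -/
theorem Ihs_eq_IB {α C : Type} [DecidableEq α] [DecidableEq C]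
    (D : Finset α) (𝒞 : Finset C) (viol : C → Finset (Finset α))
    (hne : ∀ c ∈ 𝒞, ∀ S ∈ viol c, S.Nonempty) :
    Ihs viol (D.image Sum.inl ∪ 𝒞.image Sum.inr) =
      IBk viol (D.image Sum.inl ∪ 𝒞.image Sum.inr) := by
  classical
  set X := D.image Sum.inl ∪ 𝒞.image Sum.inr with hX
  set T : Set ℕ∞ := {n : ℕ∞ | ∃ H : Set (α → Bool), H.Finite ∧ (H.ncard : ℕ∞) = n ∧
    ∀ x ∈ X, ∃ i ∈ H, evalDB viol x i} with hT
  have hmemC : ∀ c : C, Sum.inr c ∈ X → c ∈ 𝒞 := by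
    intro c hc
    simp only [hX, Finset.mem_union, Finset.mem_image] at hc
    rcases hc with ⟨t, _, h⟩ | ⟨c', hc', h⟩
    · exact absurd h (by simp)
    · cases h; exact hc'
  by_cases hcons : ConsDB viol X
  · rw [IBk, if_pos hcons]
    obtain ⟨i, hi⟩ := hcons
    have h1 : (1 : ℕ∞) ∈ T :=
      ⟨{i}, Set.finite_singleton i, by simp, fun x hx => ⟨i, rfl, hi x hx⟩⟩
    have hle : Ihs viol X ≤ 1 - 1 := tsub_le_tsub_right (sInf_le h1) 1
    simpa using hle
  · rw [IBk, if_neg hcons]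
    have hα : Nonempty α := by
      by_contra hα
      refine hcons ⟨fun _ => true, fun x hx => ?_⟩
      cases x with
      | inl t => exact absurd ⟨t⟩ hα
      | inr c =>
        intro S hS
        obtain ⟨t, _⟩ := hne c (hmemC c hx) S hS
        exact absurd ⟨t⟩ hα
    obtain ⟨a⟩ := hα
    set iT : α → Bool := fun _ => true with hiT
    set iF : α → Bool := fun _ => false with hiF
    have hneq : iT ≠ iF := by
      intro h
      have := congrFun h a
      simp [hiT, hiF] at this
    have h2 : (2 : ℕ∞) ∈ T := by
      refine ⟨{iT, iF}, Set.toFinite _, by rw [Set.ncard_pair hneq]; rfl, fun x hx => ?_⟩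
      cases x with
      | inl t => exact ⟨iT, Or.inl rfl, rfl⟩
      | inr c =>
        refine ⟨iF, Or.inr rfl, fun S hS => ?_⟩
        obtain ⟨t, ht⟩ := hne c (hmemC c hx) S hS
        exact ⟨t, ht, rfl⟩
    have hlb : ∀ n ∈ T, (2 : ℕ∞) ≤ n := by
      rintro n ⟨H, hfin, hcard, hH⟩
      by_contra hlt
      push_neg at hlt
      rw [← hcard] at hlt
      have hcard1 : H.ncard ≤ 1 := by
        have := (Nat.cast_lt (α := ℕ∞)).mp (by exact_mod_cast hlt)
        omega
      rcases (Set.ncard_le_one_iff_eq hfin).mp hcard1 with hE | ⟨j, hj⟩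
      · -- H empty, so X empty, so consistent
        refine hcons ⟨fun _ => true, fun x hx => ?_⟩
        obtain ⟨i, hi, _⟩ := hH x hx
        rw [hE] at hi
        exact absurd hi (Set.notMem_empty i)
      · refine hcons ⟨j, fun x hx => ?_⟩
        obtain ⟨i, hi, hxi⟩ := hH x hx
        rw [hj, Set.mem_singleton_iff] at hi
        rwa [hi] at hxi
    have : sInf T = 2 := le_antisymm (sInf_le h2) (le_sInf hlb)
    show sInf T - 1 = 1
    rw [this]
    decide
end

section
/- The database measure ℐ_nc satisfies Penalty: if t is a problematic tuple of D, then ℐ_nc(D) > ℐ_nc(D \ {t}), where ℐ_nc(D) = |D| − max{n : every subset of D of size n is consistent}. -/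
def MID {α : Type} (Incon : Finset α → Prop) (D : Finset α) : Set (Finset α) :=
  {X | X ⊆ D ∧ Incon X ∧ ∀ Y ⊂ X, ¬ Incon Y}

def ProblematicD {α : Type} (Incon : Finset α → Prop) (D : Finset α) : Set α :=
  {t | ∃ X ∈ MID Incon D, t ∈ X}

/-- `m(D)`: the largest `n ≤ |D|` such that every subset of `D` of cardinality
`n` is consistent. -/
noncomputable def mD {α : Type} (Incon : Finset α → Prop) (D : Finset α) : ℕ :=
  sSup {n | n ≤ D.card ∧ ∀ S ⊆ D, S.card = n → ¬ Incon S}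

/-- `ℐ_nc(D) = |D| − m(D)`. -/
noncomputable def Inc_nc {α : Type} (Incon : Finset α → Prop) (D : Finset α) : ℕ :=
  D.card - mD Incon D

/-- `ℐ_nc` satisfies Penalty: removing a problematic tuple strictly decreases
`ℐ_nc`. -/
theorem Inc_nc_penalty {α : Type} [DecidableEq α] (Incon : Finset α → Prop)
    (hmono : ∀ X Y : Finset α, X ⊆ Y → Incon X → Incon Y)
    (hempty : ¬ Incon (∅ : Finset α))
    (D : Finset α) (t : α) (ht : t ∈ ProblematicD Incon D) :
    Inc_nc Incon (D.erase t) < Inc_nc Incon D := by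
  obtain ⟨X, ⟨hXD, hXI, _⟩, htX⟩ := ht
  have htD : t ∈ D := hXD htX
  have hDI : Incon D := hmono X D hXD hXI
  set A : Set ℕ := {n | n ≤ D.card ∧ ∀ S ⊆ D, S.card = n → ¬ Incon S} with hA
  have hbdd : BddAbove A := ⟨D.card, fun n hn => hn.1⟩
  have h0 : (0 : ℕ) ∈ A := by
    refine ⟨Nat.zero_le _, fun S _ hS => ?_⟩
    rw [Finset.card_eq_zero] at hS
    simpa [hS] using hempty
  have hmem : mD Incon D ∈ A := Nat.sSup_mem ⟨0, h0⟩ hbdd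
  have hlt : mD Incon D < D.card := by
    rcases lt_or_eq_of_le hmem.1 with h | h
    · exact h
    · exact absurd hDI (hmem.2 D subset_rfl h.symm)
  have hcard : (D.erase t).card = D.card - 1 := Finset.card_erase_of_mem htD
  set A' : Set ℕ := {n | n ≤ (D.erase t).card ∧
      ∀ S ⊆ D.erase t, S.card = n → ¬ Incon S} with hA'
  have hmem' : mD Incon D ∈ A' := by
    refine ⟨by omega, fun S hS hSc => ?_⟩
    exact hmem.2 S (hS.trans (Finset.erase_subset t D)) hSc
  have hbdd' : BddAbove A' := ⟨(D.erase t).card, fun n hn => hn.1⟩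
  have hge : mD Incon D ≤ mD Incon (D.erase t) := le_csSup hbdd' hmem'
  have : Inc_nc Incon (D.erase t) = (D.erase t).card - mD Incon (D.erase t) := rfl
  have h2 : Inc_nc Incon D = D.card - mD Incon D := rfl
  omega
end

section
/- For every database DB = D ∪ 𝒞 with denial constraints, every minimal inconsistent subset of DB corresponds to a unique minimal inconsistent subset of the transformed propositional knowledge base K_DB; the correspondence S ↦ {f(t) : t ∈ S ∩ D} ∪ {g(c) : c ∈ S ∩ 𝒞} maps each minimal inconsistent subset of DB to a minimal inconsistent subset of K_DB, but this map need not be injective: there exists a DB with two distinct minimal inconsistent subsets mapped to the same minimal inconsistent subset of K_DB. -/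
/-- Consistency of a set of propositional formulas (given semantically). -/
def FCons {α : Type} (G : Set ((α → Bool) → Prop)) : Prop :=
  ∃ i : α → Bool, ∀ φ ∈ G, φ i

/-- Minimal inconsistent subsets of a set of propositional formulas. -/
def MIF {α : Type} (G₀ : Set ((α → Bool) → Prop)) : Set (Set ((α → Bool) → Prop)) :=
  {G | G ⊆ G₀ ∧ ¬ FCons G ∧ ∀ G' ⊂ G, FCons G'}

/-!
Consistency of a set of database items is consistency of the set of their formulas. If `G` is a
proper subset of the image of a minimal inconsistent `S`, the items of `S` whose formula lies in
`G` form a proper subset of `S` with image `G`, so `G` is consistent. Injectivity fails because two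
constraints with the same violations have the same formula.
-/

theorem fCons_image_iff {α β : Type} (φ : β → (α → Bool) → Prop) (s : Set β) :
    FCons (φ '' s) ↔ ∃ i : α → Bool, ∀ x ∈ s, φ x i := by
  simp [FCons]

theorem consDB_iff_fCons_image {α C : Type} (viol : C → Finset (Finset α)) (X : Finset (α ⊕ C)) :
    ConsDB viol X ↔ FCons (evalDB viol '' (X : Set (α ⊕ C))) := by
  rw [fCons_image_iff]
  rfl

theorem ConsDB.mono {α C : Type} {viol : C → Finset (Finset α)} {X Y : Finset (α ⊕ C)}
    (h : X ⊆ Y) (hY : ConsDB viol Y) : ConsDB viol X :=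
  let ⟨i, hi⟩ := hY
  ⟨i, fun x hx => hi x (h hx)⟩

theorem fCons_of_ssubset_image {α β : Type} {φ : β → (α → Bool) → Prop} {S : Finset β}
    (hS : ∀ Z ⊂ S, FCons (φ '' (Z : Set β))) {G : Set ((α → Bool) → Prop)}
    (hG : G ⊂ φ '' (S : Set β)) : FCons G := by
  classical
  obtain ⟨_, ⟨x, hxS, rfl⟩, hxG⟩ := Set.exists_of_ssubset hG
  have hZS : S.filter (φ · ∈ G) ⊂ S := Finset.filter_ssubset.mpr ⟨x, hxS, hxG⟩
  have hZG : φ '' ((S.filter (φ · ∈ G) : Finset β) : Set β) = G := by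
    rw [Finset.coe_filter]
    change φ '' ((S : Set β) ∩ φ ⁻¹' G) = G
    rw [Set.image_inter_preimage, Set.inter_eq_right]
    exact hG.subset
  exact hZG ▸ hS _ hZS

theorem image_mem_MIF_of_mem_MIDB {α C : Type} {viol : C → Finset (Finset α)}
    {X S : Finset (α ⊕ C)} (hS : S ∈ MIDB viol X) :
    evalDB viol '' (S : Set (α ⊕ C)) ∈ MIF (evalDB viol '' (X : Set (α ⊕ C))) := by
  obtain ⟨hSX, hS_incons, hS_min⟩ := hS
  refine ⟨Set.image_mono (Finset.coe_subset.mpr hSX), ?_, fun G hG => ?_⟩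
  · rwa [← consDB_iff_fCons_image]
  · exact fCons_of_ssubset_image (fun Z hZ => (consDB_iff_fCons_image viol Z).mp (hS_min Z hZ)) hG

theorem consDB_singleton_inl {α C : Type} (viol : C → Finset (Finset α)) (t : α) :
    ConsDB viol {Sum.inl t} :=
  ⟨fun _ => true, by simp [evalDB]⟩

theorem consDB_singleton_inr {α C : Type} {viol : C → Finset (Finset α)} {c : C}
    (hc : ∀ S ∈ viol c, S.Nonempty) : ConsDB viol {Sum.inr c} :=
  ⟨fun _ => false, by simpa [evalDB, Finset.Nonempty] using hc⟩

theorem Finset.subset_singleton_or_subset_singleton_of_ssubset_pair {β : Type} [DecidableEq β]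
    {Z : Finset β} {a b : β} (hZ : Z ⊂ {a, b}) : Z ⊆ {a} ∨ Z ⊆ {b} := by
  have hab : a ∉ Z ∨ b ∉ Z := by
    by_contra! h
    exact hZ.not_subset (Finset.insert_subset h.1 (Finset.singleton_subset_iff.mpr h.2))
  rcases hab with ha | hb
  · exact .inr ((Finset.subset_insert_iff_of_notMem ha).mp hZ.subset)
  · rw [Finset.pair_comm] at hZ
    exact .inl ((Finset.subset_insert_iff_of_notMem hb).mp hZ.subset)

theorem pair_mem_MIDB {α C : Type} [DecidableEq α] [DecidableEq C]
    {viol : C → Finset (Finset α)} {X : Finset (α ⊕ C)} {t : α} {c : C}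
    (hc : viol c = {{t}}) (hX : {Sum.inl t, Sum.inr c} ⊆ X) :
    {Sum.inl t, Sum.inr c} ∈ MIDB viol X := by
  refine ⟨hX, fun ⟨i, hi⟩ => ?_, fun Z hZ => ?_⟩
  · have htrue : i t = true := hi (Sum.inl t) (by simp)
    obtain ⟨_, hs, hfalse⟩ := hi (Sum.inr c) (by simp) {t} (by simp [hc])
    rw [Finset.mem_singleton.mp hs, htrue] at hfalse
    exact Bool.noConfusion hfalse
  · rcases Finset.subset_singleton_or_subset_singleton_of_ssubset_pair hZ with h | h
    · exact (consDB_singleton_inl viol t).mono h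
    · exact (consDB_singleton_inr (by simp [hc])).mono h

theorem evalDB_inr_congr {α C : Type} {viol : C → Finset (Finset α)} {c c' : C}
    (h : viol c = viol c') : evalDB viol (Sum.inr c) = evalDB viol (Sum.inr c') := by
  funext i
  simp only [evalDB, h]

/-- (a) The correspondence `S ↦ {f(t) : t ∈ S ∩ D} ∪ {g(c) : c ∈ S ∩ 𝒞}`
(here: the image of `S` under the semantic encoding `evalDB`) maps every
minimal inconsistent subset of `DB = D ∪ 𝒞` to a minimal inconsistent subset of
the propositional knowledge base `K_DB`;
(b) the map need not be injective: some `DB` has two distinct minimal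
inconsistent subsets with the same image in `K_DB`. -/
theorem MIDB_to_MIF_and_not_injective :
    (∀ (α C : Type) [DecidableEq α] [DecidableEq C]
      (D : Finset α) (𝒞 : Finset C) (viol : C → Finset (Finset α)),
      ∀ S ∈ MIDB viol (D.image Sum.inl ∪ 𝒞.image Sum.inr),
        evalDB viol '' (S : Set (α ⊕ C)) ∈
          MIF (evalDB viol ''
            ((D.image Sum.inl ∪ 𝒞.image Sum.inr : Finset (α ⊕ C)) : Set (α ⊕ C)))) ∧
    (∃ (D : Finset ℕ) (𝒞 : Finset Bool) (viol : Bool → Finset (Finset ℕ)),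
      (∀ c ∈ 𝒞, ∀ S ∈ viol c, S.Nonempty) ∧
      ∃ S₁ ∈ MIDB viol (D.image Sum.inl ∪ 𝒞.image Sum.inr),
      ∃ S₂ ∈ MIDB viol (D.image Sum.inl ∪ 𝒞.image Sum.inr),
        S₁ ≠ S₂ ∧
        evalDB viol '' (S₁ : Set (ℕ ⊕ Bool)) = evalDB viol '' (S₂ : Set (ℕ ⊕ Bool))) := by
  refine ⟨fun _ _ _ _ _ _ _ _ hS => image_mem_MIF_of_mem_MIDB hS,
    {0}, {false, true}, fun _ => {{0}}, by simp, ?_⟩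
  refine ⟨{Sum.inl 0, Sum.inr false}, pair_mem_MIDB rfl (by decide),
    {Sum.inl 0, Sum.inr true}, pair_mem_MIDB rfl (by decide), by decide, ?_⟩
  simp only [Finset.coe_insert, Finset.coe_singleton, Set.image_pair]
  rw [evalDB_inr_congr (c := false) (c' := true) rfl]
end

section
/- The measure ℐ_# satisfies Super-Additivity: if D ∩ D' = ∅ then Σ_{X ∈ MI(D ∪ D')} 1/|X| ≥ Σ_{X ∈ MI(D)} 1/|X| + Σ_{X ∈ MI(D')} 1/|X|. -/
/-- `ℐ_#(D) = Σ_{X ∈ MI(D)} 1/|X|`. -/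
noncomputable def IsharpD {α : Type} (Incon : Finset α → Prop) (D : Finset α) : ℝ :=
  ∑ᶠ X ∈ MID Incon D, (1 : ℝ) / X.card

lemma MID_finite {α : Type} (Incon : Finset α → Prop) (D : Finset α) :
    (MID Incon D).Finite := by
  apply Set.Finite.subset (D.powerset.finite_toSet)
  intro X hX
  simpa using hX.1

/-- `ℐ_#` satisfies Super-Additivity: for disjoint `D`, `D'`,
`ℐ_#(D ∪ D') ≥ ℐ_#(D) + ℐ_#(D')`. -/
theorem IsharpD_super_additivity {α : Type} [DecidableEq α] (Incon : Finset α → Prop)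
    (hmono : ∀ X Y : Finset α, X ⊆ Y → Incon X → Incon Y)
    (hempty : ¬ Incon (∅ : Finset α))
    (D D' : Finset α) (h : Disjoint D D') :
    IsharpD Incon D + IsharpD Incon D' ≤ IsharpD Incon (D ∪ D') := by
  classical
  have hf1 := MID_finite Incon D
  have hf2 := MID_finite Incon D'
  have hf3 := MID_finite Incon (D ∪ D')
  unfold IsharpD
  rw [finsum_mem_eq_finite_toFinset_sum _ hf1, finsum_mem_eq_finite_toFinset_sum _ hf2,
    finsum_mem_eq_finite_toFinset_sum _ hf3]
  have hdisj : Disjoint hf1.toFinset hf2.toFinset := by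
    rw [Finset.disjoint_left]
    intro X hX1 hX2
    rw [Set.Finite.mem_toFinset] at hX1 hX2
    have hXe : X = ∅ := by
      rw [← Finset.subset_empty]
      calc X ⊆ D ∩ D' := Finset.subset_inter hX1.1 hX2.1
        _ = ∅ := by rwa [← Finset.disjoint_iff_inter_eq_empty]
    exact hempty (hXe ▸ hX1.2.1)
  rw [← Finset.sum_union hdisj]
  apply Finset.sum_le_sum_of_subset_of_nonneg
  · intro X hX
    rw [Finset.mem_union, Set.Finite.mem_toFinset, Set.Finite.mem_toFinset] at hX
    rw [Set.Finite.mem_toFinset]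
    rcases hX with hX | hX
    · exact ⟨hX.1.trans Finset.subset_union_left, hX.2⟩
    · exact ⟨hX.1.trans Finset.subset_union_right, hX.2⟩
  · intro X _ _
    positivity
end
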